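/- Let s, s' : Fin 4 → ℝ be sign vectors (values in {-1,1}) and let q_s := (√2, s 0, s 1, s 2, s 3), q_{s'} := (√2, s' 0, s' 1, s' 2, s' 3). Let d := the number of indices i with s i ≠ s' i. Then ⟨q_s, q_{s'}⟩ = 2 - 2·d and ⟨q_s, q_s⟩ = ⟨q_{s'}, q_{s'}⟩ = 2. Consequently: ⟨q_s, q_{s'}⟩ = 0 if and only if d = 1 (the corresponding hyperplanes of H⁴ intersect orthogonally); ⟨q_s, q_{s'}⟩ = -√(⟨q_s,q_s⟩·⟨q_{s'},q_{s'}⟩) = -2 if and only if d = 2 (the hyperplanes are tangent at infinity); and -⟨q_s,q_{s'}⟩ > 2 if and only if d ≥ 3 (the hyperplanes are a positive distance apart). -/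
import Mathlib


/-- The Minkowski inner product on `ℝ^{1,4}`, identified with `Fin 5 → ℝ`. -/
noncomputable def mink (v w : Fin 5 → ℝ) : ℝ :=
  -(v 0 * w 0) + v 1 * w 1 + v 2 * w 2 + v 3 * w 3 + v 4 * w 4

set_option maxHeartbeats 3200000 in
/-- The relative geometry of two positive/negative walls of the hyperbolic `24`-cell is
governed by the number `d` of sign changes between the corresponding sign vectors:
orthogonal intersection iff `d = 1`, tangency at infinity iff `d = 2`, positive distance
iff `d ≥ 3`. -/
theorem pairwise_geometry_of_numbered_walls (s s' : Fin 4 → ℝ)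
    (hs : ∀ i, s i = -1 ∨ s i = 1) (hs' : ∀ i, s' i = -1 ∨ s' i = 1) :
    let qs : Fin 5 → ℝ := ![Real.sqrt 2, s 0, s 1, s 2, s 3]
    let qs' : Fin 5 → ℝ := ![Real.sqrt 2, s' 0, s' 1, s' 2, s' 3]
    let d : ℕ := Nat.card {i : Fin 4 // s i ≠ s' i}
    mink qs qs' = 2 - 2 * (d : ℝ) ∧
    mink qs qs = 2 ∧ mink qs' qs' = 2 ∧
    (mink qs qs' = 0 ↔ d = 1) ∧
    Real.sqrt (mink qs qs * mink qs' qs') = 2 ∧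
    (mink qs qs' = -Real.sqrt (mink qs qs * mink qs' qs') ↔ d = 2) ∧
    (2 < -mink qs qs' ↔ 3 ≤ d) := by
  intro qs qs' d
  have h2 : Real.sqrt 2 * Real.sqrt 2 = 2 := Real.mul_self_sqrt (by norm_num)
  have hd : d = ∑ i : Fin 4, if s i ≠ s' i then 1 else 0 := by
    show Nat.card _ = _
    rw [Nat.card_eq_fintype_card, Fintype.card_subtype, Finset.card_filter]
  rw [Fin.sum_univ_four] at hd
  have hm : mink qs qs' = -2 + s 0 * s' 0 + s 1 * s' 1 + s 2 * s' 2 + s 3 * s' 3 := by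
    simp [mink, qs, qs', h2]
  have hm1 : mink qs qs = 2 := by
    rcases hs 0 with h|h <;> rcases hs 1 with h1|h1 <;> rcases hs 2 with h2'|h2' <;>
      rcases hs 3 with h3|h3 <;> simp [mink, qs, h2, h, h1, h2', h3] <;> norm_num
  have hm1' : mink qs' qs' = 2 := by
    rcases hs' 0 with h|h <;> rcases hs' 1 with h1|h1 <;> rcases hs' 2 with h2'|h2' <;>
      rcases hs' 3 with h3|h3 <;> simp [mink, qs', h2, h, h1, h2', h3] <;> norm_num
  have hs4 : Real.sqrt ((2:ℝ) * 2) = 2 := by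
    rw [show (2:ℝ) * 2 = 2 ^ 2 by norm_num, Real.sqrt_sq (by norm_num : (0:ℝ) ≤ 2)]
  clear_value qs qs' d
  rw [hm1, hm1', hs4]
  rcases hs 0 with a0|a0 <;> rcases hs' 0 with b0|b0 <;>
    rcases hs 1 with a1|a1 <;> rcases hs' 1 with b1|b1 <;>
    rcases hs 2 with a2|a2 <;> rcases hs' 2 with b2|b2 <;>
    rcases hs 3 with a3|a3 <;> rcases hs' 3 with b3|b3 <;>
    rw [a0, b0, a1, b1, a2, b2, a3, b3] at hd hm <;>
    norm_num at hd hm <;>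
    rw [hm, hd] <;> norm_num
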